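/- arXiv:1503.03817 — 3 statements merged into one kernel-verified Lean document; each statement's English description precedes it below -/
import Mathlib

section
/- Let (M², g) be a Riemannian surface with Gaussian curvature K < 0 everywhere satisfying Δ log(-K) + (8/3)K = 0 (equivalently KΔK + |∇K|² + (8/3)K³ = 0). Then the metric g_{1/2} = (-K)^{1/2} g has Gaussian curvature K_{1/2} = -(1/3)(-K)^{1/2} < 0 and satisfies the Ricci condition Δ_{1/2} log(-K_{1/2}) + 4K_{1/2} = 0, where Δ_{1/2} is the Laplacian of g_{1/2}. -/
/-- Let `(M², g)` have Gaussian curvature `K < 0` with `Δ log(-K) + (8/3)K = 0`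
(`L = Δ log(-K)`). Then the metric `g_{1/2} = (-K)^{1/2} g` has Gaussian curvature
`K12 = (-K)^{-1/2}(K + (1/4) L)` (conformal change with `φ = (1/4) log(-K)`), which equals
`-(1/3)(-K)^{1/2} < 0`, and satisfies the Ricci condition `Δ_{1/2} log(-K12) + 4 K12 = 0`,
where `D = Δ_{1/2} log(-K12) = (-K)^{-1/2} · (1/2) L` (using `Δ_{1/2} = e^{-2φ} Δ` and
`log(-K12) = (1/2) log(-K) - log 3`). -/
theorem stmt3 {M : Type*} (K L K12 D : M → ℝ)
    (hK : ∀ p, K p < 0)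
    (hcond : ∀ p, L p + (8 / 3) * K p = 0)
    (hK12 : ∀ p, K12 p = (-K p) ^ (-(1 : ℝ) / 2) * (K p + (1 / 4) * L p))
    (hD : ∀ p, D p = (-K p) ^ (-(1 : ℝ) / 2) * ((1 / 2) * L p)) :
    ∀ p, K12 p = -(1 / 3) * (-K p) ^ ((1 : ℝ) / 2) ∧ K12 p < 0 ∧ D p + 4 * K12 p = 0 := by
  intro p
  have hpos : 0 < -K p := by linarith [hK p]
  have hL : L p = -(8 / 3) * K p := by linarith [hcond p]
  have hmul : (-K p) ^ (-(1 : ℝ) / 2) * (-K p) = (-K p) ^ ((1 : ℝ) / 2) := by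
    nth_rewrite 2 [← Real.rpow_one (-K p)]
    rw [← Real.rpow_add hpos]
    norm_num
  have hKeq : K12 p = -(1 / 3) * (-K p) ^ ((1 : ℝ) / 2) := by
    rw [hK12 p, hL]
    have : K p + 1 / 4 * (-(8 / 3) * K p) = -(1/3) * (-K p) := by ring
    rw [this]
    rw [mul_comm (-(1/3)) (-K p), ← mul_assoc, hmul]
    ring
  refine ⟨hKeq, ?_, ?_⟩
  · rw [hKeq]
    have := Real.rpow_pos_of_pos hpos ((1:ℝ)/2)
    nlinarith
  · rw [hKeq, hD p, hL]
    have : (1:ℝ) / 2 * (-(8 / 3) * K p) = 4/3 * (-K p) := by ring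
    rw [this, mul_comm ((4:ℝ)/3) (-K p), ← mul_assoc, hmul]
    ring
end

section
/- Let c ∈ ℝ and let K : I → ℝ be smooth with K'(u) > 0 and c - K(u) > 0 for all u, satisfying 24(c - K)K'' + 33(K')² + 64K(c - K)² = 0. Define on I × ℝ the metric g = g₁₁ du² + 2g₁₂ du ds + ds² with g₁₁(u,s) = (9/64)(K'(u)/(c - K(u)))² s² + 1, g₁₂(u,s) = -(3K'(u)/(8(c - K(u)))) s. Then the Gaussian curvature of g at (u,s) equals K(u). -/
/-- Partial derivative in the first coordinate of a function of two real variables. -/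
noncomputable def pu (f : ℝ → ℝ → ℝ) (u s : ℝ) : ℝ := deriv (fun x => f x s) u

/-- Partial derivative in the second coordinate of a function of two real variables. -/
noncomputable def ps (f : ℝ → ℝ → ℝ) (u s : ℝ) : ℝ := deriv (fun y => f u y) s

/-- The Brioschi formula for the Gaussian curvature of a metric
`E du² + 2F du ds + G ds²` on a 2-dimensional coordinate domain. -/
noncomputable def brioschi (E F G : ℝ → ℝ → ℝ) (u s : ℝ) : ℝ :=
  (Matrix.det !![-(1/2) * ps (ps E) u s + pu (ps F) u s - (1/2) * pu (pu G) u s,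
        (1/2) * pu E u s, pu F u s - (1/2) * ps E u s;
      ps F u s - (1/2) * pu G u s, E u s, F u s;
      (1/2) * ps G u s, F u s, G u s]
    - Matrix.det !![0, (1/2) * ps E u s, (1/2) * pu G u s;
        (1/2) * ps E u s, E u s, F u s;
        (1/2) * pu G u s, F u s, G u s])
    / (E u s * G u s - (F u s) ^ 2) ^ 2

set_option maxHeartbeats 1000000 in
/-- Let `c ∈ ℝ` and `K : I → ℝ` smooth with `K' > 0` and `c - K > 0`,
satisfying `24(c-K)K'' + 33(K')² + 64K(c-K)² = 0`. For the metric on `I × ℝ` with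
`g₁₁ = (9/64)(K'/(c-K))² s² + 1`, `g₁₂ = -(3K'/(8(c-K))) s`, `g₂₂ = 1`, the Gaussian
curvature (computed via the Brioschi formula) at `(u,s)` equals `K(u)`. -/
theorem stmt7 (c : ℝ) (K : ℝ → ℝ) (I : Set ℝ) (hI : IsOpen I)
    (hK : ContDiffOn ℝ (⊤ : ℕ∞) K I)
    (hK' : ∀ u ∈ I, 0 < deriv K u) (hc : ∀ u ∈ I, 0 < c - K u)
    (hODE : ∀ u ∈ I, 24 * (c - K u) * deriv (deriv K) u + 33 * (deriv K u) ^ 2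
      + 64 * K u * (c - K u) ^ 2 = 0)
    (E F G : ℝ → ℝ → ℝ)
    (hE : ∀ u s, E u s = (9 / 64) * (deriv K u / (c - K u)) ^ 2 * s ^ 2 + 1)
    (hF : ∀ u s, F u s = -(3 * deriv K u / (8 * (c - K u))) * s)
    (hG : ∀ u s, G u s = 1) :
    ∀ u ∈ I, ∀ s : ℝ, brioschi E F G u s = K u := by
  intro u hu s
  have hd0 : c - K u ≠ 0 := ne_of_gt (hc u hu)
  -- differentiability
  have hKdiff : DifferentiableAt ℝ K u :=
    (hK.contDiffAt (hI.mem_nhds hu)).differentiableAt (by simp)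
  have hK'diff : DifferentiableAt ℝ (deriv K) u :=
    ((hK.deriv_of_isOpen hI (show (1 : WithTop ℕ∞) + 1 ≤ ((⊤ : ℕ∞) : WithTop ℕ∞) from WithTop.coe_le_coe.mpr le_top)).contDiffAt (hI.mem_nhds hu)).differentiableAt one_ne_zero
  set k1 := deriv K u with hk1
  set k2 := deriv (deriv K) u with hk2
  set d := c - K u with hd
  -- the function a and its derivative
  set a : ℝ → ℝ := fun x => deriv K x / (c - K x) with ha
  have hden : HasDerivAt (fun x => c - K x) (-k1) u := by
    simpa using (hKdiff.hasDerivAt).const_sub c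
  have hda : HasDerivAt a ((k2 * d - k1 * (-k1)) / d ^ 2) u :=
    hK'diff.hasDerivAt.div hden hd0
  set a' : ℝ := (k2 * d - k1 * (-k1)) / d ^ 2 with ha'
  -- rewrite F in terms of a
  have key : ∀ x, 3 * deriv K x / (8 * (c - K x)) = 3 / 8 * a x := fun x =>
    (div_mul_div_comm 3 8 (deriv K x) (c - K x)).symm
  -- ps-values (valid for every x since the formulas hold globally)
  have hpsE : ∀ x y, ps E x y = 9 / 32 * (a x) ^ 2 * y := by
    intro x y
    have : (fun y => E x y) = fun y => 9 / 64 * (a x) ^ 2 * y ^ 2 + 1 := by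
      funext y; rw [hE]
    rw [ps, this]
    have h : HasDerivAt (fun y : ℝ => 9 / 64 * (a x) ^ 2 * y ^ 2 + 1)
        (9 / 64 * (a x) ^ 2 * (2 * y)) y := by
      simpa using (((hasDerivAt_pow 2 y).const_mul (9 / 64 * (a x) ^ 2)).add_const 1)
    rw [h.deriv]; ring
  have hpsF : ∀ x y, ps F x y = -(3 / 8 * a x) := by
    intro x y
    have : (fun y => F x y) = fun y => -(3 / 8 * a x) * y := by
      funext y; rw [hF, key]
    rw [ps, this]
    simpa using ((hasDerivAt_id y).const_mul (-(3 / 8 * a x))).deriv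
  have hpsG : ∀ x y, ps G x y = 0 := by
    intro x y
    have : (fun y => G x y) = fun _ => (1 : ℝ) := by funext y; rw [hG]
    rw [ps, this, deriv_const]
  have hpuG : ∀ x y, pu G x y = 0 := by
    intro x y
    have : (fun x => G x y) = fun _ => (1 : ℝ) := by funext x; rw [hG]
    rw [pu, this, deriv_const]
  -- second derivatives
  have h1 : ps (ps E) u s = 9 / 32 * (a u) ^ 2 := by
    have : (fun y => ps E u y) = fun y => 9 / 32 * (a u) ^ 2 * y := by
      funext y; rw [hpsE]
    rw [ps, this]
    simpa using ((hasDerivAt_id s).const_mul (9 / 32 * (a u) ^ 2)).deriv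
  have h2 : pu (ps F) u s = -(3 / 8 * a') := by
    have : (fun x => ps F x s) = fun x => -(3 / 8 * a x) := by
      funext x; rw [hpsF]
    rw [pu, this]
    exact ((hda.const_mul (3 / 8)).neg).deriv
  have h3 : pu (pu G) u s = 0 := by
    have : (fun x => pu G x s) = fun _ => (0 : ℝ) := by funext x; rw [hpuG]
    rw [pu, this, deriv_const]
  -- first derivatives in u
  have h4 : pu E u s = 9 / 64 * (2 * a u * a') * s ^ 2 := by
    have heq : (fun x => E x s) = fun x => 9 / 64 * (a x) ^ 2 * s ^ 2 + 1 := by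
      funext x; rw [hE]
    rw [pu, heq]
    have h : HasDerivAt (fun x => 9 / 64 * (a x) ^ 2 * s ^ 2 + 1)
        (9 / 64 * (2 * a u ^ 1 * a') * s ^ 2) u :=
      (((hda.pow 2).const_mul (9 / 64)).mul_const (s ^ 2)).add_const 1
    rw [h.deriv]; ring
  have h5 : pu F u s = -(3 / 8 * a') * s := by
    have heq : (fun x => F x s) = fun x => -(3 / 8 * a x) * s := by
      funext x; rw [hF, key]
    rw [pu, heq]
    exact (((hda.const_mul (3 / 8)).neg).mul_const s).deriv
  -- now compute
  rw [brioschi]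
  simp only [Matrix.det_fin_three, Matrix.of_apply, Matrix.cons_val', Matrix.cons_val_zero,
    Matrix.cons_val_one, Matrix.head_cons, Matrix.empty_val', Matrix.cons_val_fin_one,
    Matrix.head_fin_const, Matrix.cons_val_two, Matrix.tail_cons]
  rw [h1, h2, h3, h4, h5, hpsE, hpsF, hpsG, hpuG, hE, hF, hG, key]
  have hau : a u = k1 / d := rfl
  simp only [← hk1, ← hk2, ← hd]
  rw [hau, ha']
  have hODE' : 24 * d * k2 + 33 * k1 ^ 2 + 64 * K u * d ^ 2 = 0 := by
    have := hODE u hu; rw [← hk1, ← hk2, ← hd] at this; linarith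
  set Ku := K u with hKu
  clear hODE hE hF hG hK' hc hKdiff hK'diff hK hI hu hda hden h1 h2 h3 h4 h5 hpsE hpsF hpsG hpuG key hau hk1 hk2 hd ha' hKu ha
  clear a' a
  clear_value k1 k2 d Ku
  trans (-(9 / 64) * (k1 / d) ^ 2 - 3 / 8 * ((k2 * d - k1 * -k1) / d ^ 2))
  · ring
  · field_simp
    linear_combination (-8) * hODE'
end

section
/- Let (M², g) be a Riemannian surface with K < 0 satisfying Δ log(-K) + (8/3)K = 0. Then the Gaussian curvature K₋₁ of the metric g₋₁ = (-K)^{-1}g satisfies K₋₁ = -(7/3)(-K)², and conversely, if (M²,g) satisfies the Ricci condition Δ log(-K) + 4K = 0 with K < 0, then the Gaussian curvature K̃ of g̃ = (-K)^{-1}g satisfies K̃ Δ̃K̃ + |∇̃K̃|²_{g̃} + (8/3)K̃³ = 0, where Δ̃, ∇̃ are taken with respect to g̃. -/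
/-- Let `(M², g)` be a Riemannian surface with `K < 0`, with Laplace–Beltrami
operator `Δ` (sign convention `Δ = -trace Hess`, chain rule
`Δ(F ∘ K) = F'(K) ΔK - F''(K) Γ K` where `Γ u = |∇u|²_g` is the squared gradient norm).
Let `Kt` be the Gaussian curvature of the conformal metric `g̃ = (-K)^{-1} g = e^{2φ} g`,
`φ = -(1/2) log(-K)`, given by `Kt = (-K)(K + Δφ)`.
(a) If `Δ log(-K) + (8/3)K = 0` then `Kt = -(7/3)(-K)²`.
(b) Conversely (Ricci condition), if `Δ log(-K) + 4K = 0`, then `Kt` satisfies the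
biconservative curvature equation with respect to `g̃`:
`Kt Δ̃Kt + |∇̃Kt|²_g̃ + (8/3)Kt³ = 0`, where `Δ̃ = (-K) Δ` and `|∇̃·|²_g̃ = (-K) Γ`. -/
theorem stmt17 {M : Type*} (K : M → ℝ)
    (Δ : (M → ℝ) → (M → ℝ)) (Γ : (M → ℝ) → (M → ℝ))
    (hK : ∀ p, K p < 0)
    (hΔlin : ∀ (a : ℝ) (u : M → ℝ), Δ (fun q => a * u q) = fun q => a * Δ u q)
    (hΓlin : ∀ (a : ℝ) (u : M → ℝ), Γ (fun q => a * u q) = fun q => a ^ 2 * Γ u q)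
    (hchainlog : ∀ p, Δ (fun q => Real.log (-K q)) p = Δ K p / K p + Γ K p / (K p) ^ 2)
    (hchainsq : ∀ p, Δ (fun q => (K q) ^ 2) p = 2 * K p * Δ K p - 2 * Γ K p)
    (hΓsq : ∀ p, Γ (fun q => (K q) ^ 2) p = 4 * (K p) ^ 2 * Γ K p)
    (Kt : M → ℝ)
    (hKt : ∀ p, Kt p = (-K p) * (K p + Δ (fun q => -(1 / 2) * Real.log (-K q)) p)) :
    ((∀ p, Δ (fun q => Real.log (-K q)) p + (8 / 3) * K p = 0) →
        ∀ p, Kt p = -(7 / 3) * (-K p) ^ 2) ∧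
      ((∀ p, Δ (fun q => Real.log (-K q)) p + 4 * K p = 0) →
        ∀ p, Kt p * ((-K p) * Δ Kt p) + (-K p) * Γ Kt p + (8 / 3) * (Kt p) ^ 3 = 0) := by
  have hKne : ∀ p, K p ≠ 0 := fun p => ne_of_lt (hK p)
  have hKt' : ∀ p, Kt p = -K p * (K p - (1 / 2) * Δ (fun q => Real.log (-K q)) p) := by
    intro p
    rw [hKt p]
    simp only [hΔlin]
    ring
  constructor
  · intro h p
    have h1 := h p
    rw [hKt' p]
    linear_combination (K p / 2) * h1
  · intro h p
    have hlog : ∀ p, Δ (fun q => Real.log (-K q)) p = -4 * K p := by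
      intro p; have := h p; linarith
    have hkey : K p * Δ K p + Γ K p + 4 * (K p) ^ 3 = 0 := by
      have heq : Δ K p / K p + Γ K p / (K p) ^ 2 = -4 * K p := by
        rw [← hchainlog p, hlog p]
      field_simp [hKne p] at heq
      have h2 : K p * (K p * Δ K p + Γ K p + 4 * (K p) ^ 3) = 0 := by linear_combination (K p) * heq
      rcases mul_eq_zero.mp h2 with h3 | h3
      · exact absurd h3 (hKne p)
      · exact h3
    have hKtfun : Kt = fun q => -3 * (K q) ^ 2 := by
      funext q
      rw [hKt' q, hlog q]; ring
    have hΔKt : Δ Kt p = -3 * (2 * K p * Δ K p - 2 * Γ K p) := by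
      rw [hKtfun]
      simp only [hΔlin]
      rw [hchainsq p]
    have hΓKt : Γ Kt p = 9 * (4 * (K p) ^ 2 * Γ K p) := by
      rw [hKtfun]
      simp only [hΓlin]
      rw [hΓsq p]; norm_num
    have hKtp : Kt p = -3 * (K p) ^ 2 := by rw [hKtfun]
    rw [hKtp, hΔKt, hΓKt]
    linear_combination (-18 * (K p) ^ 3) * hkey
end
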